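/- arXiv:1106.0356 — 2 statements merged into one kernel-verified Lean document; each statement's English description precedes it below -/
import Mathlib

section
/- Let $a>0$ and let $(a_n)_{n\ge 0}$ be a complex sequence with $|a_n - a| \le c_0|g_0|$ for all $n$, where $g_0\in\mathbb{C}$ satisfies $|g_0|<\varepsilon$ and $|\mathrm{Arg}(g_0)|\le \pi-\delta$ for some $\delta\in(0,\pi/2)$. Define $A_n = \frac{1}{n}\sum_{k=0}^{n-1} a_k$ and $\tilde g_n = g_0/(1+g_0 n A_n)$. Then there exists $\varepsilon_0(\delta)>0$ such that if $\varepsilon\le\varepsilon_0(\delta)$ and additionally $c_0\varepsilon \le a/2$, then for all $n\ge 0$ the denominator $1+g_0 n A_n$ is nonzero, $|\tilde g_n| \le 2\varepsilon/\sin\delta$, and $|\mathrm{Arg}(\tilde g_n)| \le \pi - \delta/2$. -/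
/-!
Write `g̃ₙ = (g₀⁻¹ + Sₙ)⁻¹` with `Sₙ = ∑_{k<n} aₖ`. Once `ε₀` forces `c₀ ε ≤ a sin (δ/2)`, the
hypothesis on `(aₖ)` puts `Sₙ` in the disc of radius `n a sin (δ/2)` around `n a`, hence in the
cone `|Arg| ≤ δ/2`, while `g₀⁻¹` lies in the sector `|Arg| ≤ π - δ`. Both facts are read off from
the linear functional `J z = Im (z e^{iδ/2}) = |z| sin (Arg z + δ/2)`: it is `≥ |g₀⁻¹| sin (δ/2)`
at `g₀⁻¹` (in the upper half of the sector) and `≥ 0` at `Sₙ`, so `J (g₀⁻¹ + Sₙ) > 0`, which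
bounds both `|g₀⁻¹ + Sₙ|` from below and `Arg (g₀⁻¹ + Sₙ)`. The lower half of the sector follows
by conjugation.
-/

open Real

theorem Complex.im_mul_exp_mul_I (z : ℂ) (γ : ℝ) :
    (z * Complex.exp (γ * Complex.I)).im = ‖z‖ * Real.sin (z.arg + γ) := by
  conv_lhs => rw [← Complex.norm_mul_exp_arg_mul_I z]
  rw [mul_assoc, ← Complex.exp_add, ← add_mul, ← Complex.ofReal_add, Complex.im_ofReal_mul,
    Complex.exp_ofReal_mul_I_im]

theorem Complex.im_mul_exp_mul_I_le_norm (z : ℂ) (γ : ℝ) :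
    (z * Complex.exp (γ * Complex.I)).im ≤ ‖z‖ := by
  simpa [Complex.norm_exp_ofReal_mul_I] using Complex.im_le_norm (z * Complex.exp (γ * Complex.I))

theorem Complex.abs_arg_conj (z : ℂ) : |(starRingEnd ℂ z).arg| = |z.arg| := by
  rw [Complex.arg_conj]
  split_ifs with h
  · rw [h]
  · rw [abs_neg]

theorem Real.sin_le_sin_of_le_of_le_pi_sub {γ x : ℝ} (hγ : -(π / 2) ≤ γ) (h₁ : γ ≤ x)
    (h₂ : x ≤ π - γ) : sin γ ≤ sin x := by
  rcases le_total x (π / 2) with hx | hx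
  · exact sin_le_sin_of_le_of_le_pi_div_two hγ hx h₁
  · rw [← sin_pi_sub x]
    exact sin_le_sin_of_le_of_le_pi_div_two hγ (by linarith) (by linarith)

theorem Real.mem_Ioo_of_sin_pos {x : ℝ} (hx₁ : -π < x) (hx₂ : x < 2 * π) (hsin : 0 < sin x) :
    x ∈ Set.Ioo 0 π := by
  constructor
  · by_contra! hx
    linarith [sin_nonpos_of_nonpos_of_neg_pi_le hx hx₁.le]
  · by_contra! hx
    have := sin_nonneg_of_nonneg_of_le_pi (x := x - π) (by linarith) (by linarith)
    rw [sin_sub_pi] at this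
    linarith

theorem Complex.sector_add_ball_of_arg_nonneg {γ r : ℝ} {h S : ℂ} (hγ : 0 < γ) (hh : h ≠ 0)
    (harg : h.arg ∈ Set.Icc 0 (π - 2 * γ)) (hS : ‖S - r‖ ≤ r * Real.sin γ) :
    ‖h‖ * Real.sin γ ≤ ‖h + S‖ ∧ |(h + S).arg| ≤ π - γ := by
  set u := Complex.exp (γ * Complex.I)
  have hJ_add : ((h + S) * u).im = (h * u).im + ((S - r) * u).im + r * Real.sin γ := by
    simp only [u, add_mul, sub_mul, Complex.add_im, Complex.sub_im, Complex.im_ofReal_mul,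
      Complex.exp_ofReal_mul_I_im]
    ring
  have hJh : ‖h‖ * Real.sin γ ≤ (h * u).im := by
    rw [Complex.im_mul_exp_mul_I]
    gcongr
    exact Real.sin_le_sin_of_le_of_le_pi_sub (by linarith [pi_pos]) (by linarith [harg.1])
      (by linarith [harg.2])
  have hJS : -‖S - r‖ ≤ ((S - r) * u).im := by
    have := Complex.im_mul_exp_mul_I_le_norm (-(S - r)) γ
    rw [neg_mul, Complex.neg_im, norm_neg] at this
    linarith
  have hpos : 0 < ‖h‖ * Real.sin γ :=
    mul_pos (norm_pos_iff.mpr hh) (Real.sin_pos_of_pos_of_lt_pi hγ (by linarith [harg.1, harg.2]))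
  have hJw : ‖h‖ * Real.sin γ ≤ ((h + S) * u).im := by linarith
  refine ⟨hJw.trans (Complex.im_mul_exp_mul_I_le_norm _ γ), ?_⟩
  have hsin : 0 < Real.sin ((h + S).arg + γ) := by
    rw [Complex.im_mul_exp_mul_I] at hJw
    exact pos_of_mul_pos_right (hpos.trans_le hJw) (norm_nonneg _)
  obtain ⟨h₁, h₂⟩ := Real.mem_Ioo_of_sin_pos
    (by linarith [Complex.neg_pi_lt_arg (h + S)])
    (by linarith [Complex.arg_le_pi (h + S), harg.1, harg.2]) hsin
  rw [abs_le]
  constructor <;> linarith [harg.1, harg.2]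

theorem Complex.sector_add_ball {γ r : ℝ} {h S : ℂ} (hγ : 0 < γ) (hh : h ≠ 0)
    (harg : |h.arg| ≤ π - 2 * γ) (hS : ‖S - r‖ ≤ r * Real.sin γ) :
    ‖h‖ * Real.sin γ ≤ ‖h + S‖ ∧ |(h + S).arg| ≤ π - γ := by
  rcases le_or_gt 0 h.arg with hnonneg | hneg
  · exact sector_add_ball_of_arg_nonneg hγ hh ⟨hnonneg, (le_abs_self _).trans harg⟩ hS
  · have harg_conj : (starRingEnd ℂ h).arg = -h.arg := by
      rw [Complex.arg_conj, if_neg (by linarith [Real.pi_pos])]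
    have := sector_add_ball_of_arg_nonneg (r := r) (S := starRingEnd ℂ S) hγ
      ((map_ne_zero _).mpr hh) ⟨by linarith, by rw [harg_conj, ← abs_of_neg hneg]; exact harg⟩
      (by rwa [← Complex.conj_ofReal, ← map_sub, Complex.norm_conj])
    rwa [← map_add, Complex.norm_conj, Complex.norm_conj, Complex.abs_arg_conj] at this

theorem Complex.div_one_add_mul_mem_sector {γ r : ℝ} {g S : ℂ} (hγ : 0 < γ)
    (harg : |g.arg| ≤ π - 2 * γ) (hS : ‖S - r‖ ≤ r * Real.sin γ) :
    1 + g * S ≠ 0 ∧ ‖g / (1 + g * S)‖ ≤ ‖g‖ / Real.sin γ ∧ |(g / (1 + g * S)).arg| ≤ π - γ := by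
  rcases eq_or_ne g 0 with rfl | hg
  · simp only [Complex.arg_zero, abs_zero] at harg
    simp only [zero_mul, add_zero, ne_eq, one_ne_zero, not_false_eq_true, zero_div, norm_zero,
      Complex.arg_zero, abs_zero, true_and]
    constructor <;> linarith
  obtain ⟨hnorm, harg'⟩ := sector_add_ball hγ (inv_ne_zero hg) (by rwa [Complex.abs_arg_inv]) hS
  have hsin : 0 < Real.sin γ :=
    Real.sin_pos_of_pos_of_lt_pi hγ (by linarith [abs_nonneg g.arg, pi_pos])
  have hfactor : 1 + g * S = g * (g⁻¹ + S) := by field_simp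
  have hquot : g / (1 + g * S) = (g⁻¹ + S)⁻¹ := by
    rw [hfactor, div_mul_eq_div_div, div_self hg, one_div]
  have hpos : 0 < ‖g⁻¹‖ * Real.sin γ := mul_pos (norm_pos_iff.mpr (inv_ne_zero hg)) hsin
  have hsum : g⁻¹ + S ≠ 0 := norm_pos_iff.mp (hpos.trans_le hnorm)
  refine ⟨hfactor ▸ mul_ne_zero hg hsum, ?_, by rwa [hquot, Complex.abs_arg_inv]⟩
  rw [hquot, norm_inv]
  calc ‖g⁻¹ + S‖⁻¹ ≤ (‖g⁻¹‖ * Real.sin γ)⁻¹ := inv_anti₀ hpos hnorm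
    _ = ‖g‖ / Real.sin γ := by rw [norm_inv, mul_inv, inv_inv, div_eq_mul_inv]

theorem stmt_0_general (δ a c0 : ℝ) (hδ : δ ∈ Set.Ioo 0 (π / 2)) (ha : 0 < a) :
    ∃ ε₀ > (0 : ℝ), ∀ ε : ℝ, 0 < ε → ε ≤ ε₀ → c0 * ε ≤ a / 2 →
      ∀ g₀ : ℂ, ‖g₀‖ < ε → |g₀.arg| ≤ π - δ →
      ∀ aseq : ℕ → ℂ, (∀ n, ‖aseq n - (a : ℂ)‖ ≤ c0 * ‖g₀‖) →
      ∀ n : ℕ,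
        (1 + g₀ * (n : ℂ) * ((∑ k ∈ Finset.range n, aseq k) / (n : ℂ)) ≠ 0) ∧
        ‖g₀ / (1 + g₀ * (n : ℂ) * ((∑ k ∈ Finset.range n, aseq k) / (n : ℂ)))‖
          ≤ 2 * ε / Real.sin δ ∧
        |(g₀ / (1 + g₀ * (n : ℂ) * ((∑ k ∈ Finset.range n, aseq k) / (n : ℂ)))).arg|
          ≤ π - δ / 2 := by
  obtain ⟨hδ₀, hδπ⟩ := hδ
  have hsin : 0 < sin (δ / 2) := sin_pos_of_pos_of_lt_pi (by linarith) (by linarith [pi_pos])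
  have hcos : 0 < cos (δ / 2) := cos_pos_of_mem_Ioo ⟨by linarith, by linarith⟩
  refine ⟨a * sin (δ / 2) / (|c0| + 1), by positivity,
    fun ε _ hε _ g₀ hg₀ harg aseq haseq n ↦ ?_⟩
  have hstep : c0 * ‖g₀‖ ≤ a * sin (δ / 2) :=
    calc c0 * ‖g₀‖ ≤ |c0| * ε := by gcongr; exact le_abs_self c0
      _ ≤ |c0| * (a * sin (δ / 2) / (|c0| + 1)) := by gcongr
      _ ≤ a * sin (δ / 2) := by
        rw [mul_div_assoc', div_le_iff₀ (by positivity)]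
        nlinarith [mul_pos ha hsin]
  have hS : ‖∑ k ∈ Finset.range n, aseq k - ((n * a : ℝ) : ℂ)‖ ≤ (n * a) * sin (δ / 2) := by
    have := norm_sum_le_of_le (Finset.range n) fun k _ ↦ (haseq k).trans hstep
    simpa [Finset.sum_sub_distrib, mul_assoc] using this
  rw [mul_assoc, mul_div_cancel_of_imp' fun hn ↦ by simp_all]
  obtain ⟨hne, hnorm, harg'⟩ :=
    Complex.div_one_add_mul_mem_sector (γ := δ / 2) (g := g₀) (by linarith) (by linarith) hS
  refine ⟨hne, hnorm.trans ?_, harg'⟩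
  calc ‖g₀‖ / sin (δ / 2) ≤ ε / (sin (δ / 2) * cos (δ / 2)) := by
        gcongr
        exact mul_le_of_le_one_right hsin.le (cos_le_one _)
    _ = 2 * ε / sin δ := by
        rw [show δ = 2 * (δ / 2) by ring, sin_two_mul]
        field_simp

/-- Lemma A.1: the approximate flow `g̃ n = g₀ / (1 + g₀ n Aₙ)` stays in a slightly
larger sector. -/
theorem stmt_0 (δ a c0 : ℝ) (hδ : δ ∈ Set.Ioo 0 (π / 2)) (ha : 0 < a) (hc0 : 0 ≤ c0) :
    ∃ ε₀ > (0 : ℝ), ∀ ε : ℝ, 0 < ε → ε ≤ ε₀ → c0 * ε ≤ a / 2 →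
      ∀ g₀ : ℂ, ‖g₀‖ < ε → |g₀.arg| ≤ π - δ →
      ∀ aseq : ℕ → ℂ, (∀ n, ‖aseq n - (a : ℂ)‖ ≤ c0 * ‖g₀‖) →
      ∀ n : ℕ,
        (1 + g₀ * (n : ℂ) * ((∑ k ∈ Finset.range n, aseq k) / (n : ℂ)) ≠ 0) ∧
        ‖g₀ / (1 + g₀ * (n : ℂ) * ((∑ k ∈ Finset.range n, aseq k) / (n : ℂ)))‖
          ≤ 2 * ε / Real.sin δ ∧
        |(g₀ / (1 + g₀ * (n : ℂ) * ((∑ k ∈ Finset.range n, aseq k) / (n : ℂ)))).arg|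
          ≤ π - δ / 2 :=
  stmt_0_general δ a c0 hδ ha
end

section
/- Let $a>0$, $g_0>0$, and define $I_n = \int_0^n \frac{g_0}{1+g_0\int_0^s a(t)\,dt}\,ds$ where $a:[0,\infty)\to\mathbb{R}$ is measurable with $a(s) = a + \lambda r(s)$, $|r(s)|\le C$, and $\lambda$ small enough that $a(s)\ge a/2$. Then $\left| I_n - \frac{1}{a}\log(1+a g_0 n)\right| \le \frac{4C\lambda}{a^2}\log(1+a g_0 n)$ for all $n\ge 0$. -/
open Real MeasureTheory intervalIntegral

/-!
Write `A(s) = ∫₀ˢ a(t) dt`. Since `A(s) ≥ a s / 2`, the denominators satisfy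
`(1 + g₀ A(s)) (1 + a g₀ s) ≥ (1 + a g₀ s)² / 2`, and `|A(s) - a s| ≤ λ C s`, so the two integrands
differ by at most `2 λ C g₀² s / (1 + a g₀ s)²`. The integral of this majorant over `[0, n]` is
`(2 λ C / a²) ∫₀^{a g₀ n} x / (1 + x)² dx ≤ (2 λ C / a²) log (1 + a g₀ n)`, while the unperturbed
integrand integrates exactly to `(1 / a) log (1 + a g₀ n)`.
-/

open Set

lemma abs_inv_one_add_sub_inv_one_add_le {x y : ℝ} (hy : 0 ≤ y) (hxy : y / 2 ≤ x) :
    |(1 + x)⁻¹ - (1 + y)⁻¹| ≤ 2 * |x - y| / (1 + y) ^ 2 := by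
  have hx : 0 < 1 + x := by linarith
  have hy' : 0 < 1 + y := by linarith
  have hprod : (1 + y) ^ 2 / 2 ≤ (1 + x) * (1 + y) := by nlinarith
  rw [inv_sub_inv hx.ne' hy'.ne', abs_div, abs_of_pos (mul_pos hx hy'), abs_sub_comm,
    add_sub_add_left_eq_sub]
  calc |x - y| / ((1 + x) * (1 + y)) ≤ |x - y| / ((1 + y) ^ 2 / 2) := by gcongr
    _ = 2 * |x - y| / (1 + y) ^ 2 := by field_simp

lemma integral_inv_one_add_mul {k n : ℝ} (hk : k ≠ 0) (hn : 0 < 1 + k * n) :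
    ∫ s in (0:ℝ)..n, (1 + k * s)⁻¹ = log (1 + k * n) / k := by
  rw [integral_comp_add_mul (fun x => x⁻¹) hk, mul_zero, add_zero,
    integral_inv_of_pos one_pos hn, div_one, smul_eq_mul, inv_mul_eq_div]

lemma integral_div_one_add_mul_mul {a g n : ℝ} (ha : a ≠ 0) (hg : g ≠ 0)
    (hn : 0 < 1 + a * g * n) :
    ∫ s in (0:ℝ)..n, g / (1 + a * g * s) = log (1 + a * g * n) / a := by
  simp_rw [div_eq_mul_inv g]
  rw [intervalIntegral.integral_const_mul, integral_inv_one_add_mul (mul_ne_zero ha hg) hn]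
  field_simp

lemma integral_div_one_add_mul_sq_le {k n : ℝ} (hk : 0 < k) (hn : 0 ≤ n) :
    ∫ s in (0:ℝ)..n, s / (1 + k * s) ^ 2 ≤ log (1 + k * n) / k ^ 2 := by
  have hpos : ∀ s, 0 ≤ s → 0 < 1 + k * s := fun s hs => by positivity
  have hderiv : ∀ s ∈ uIcc 0 n,
      HasDerivAt (fun x => (log (1 + k * x) + (1 + k * x)⁻¹) / k ^ 2) (s / (1 + k * s) ^ 2) s := by
    intro s hs
    rw [uIcc_of_le hn] at hs
    have hlin : HasDerivAt (fun x => 1 + k * x) k s := by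
      simpa using ((hasDerivAt_id s).const_mul k).const_add 1
    refine (((hlin.log (hpos s hs.1).ne').add (hlin.inv (hpos s hs.1).ne')).div_const
      (k ^ 2)).congr_deriv ?_
    have := (hpos s hs.1).ne'
    field_simp
    ring
  have hcont : ContinuousOn (fun s => s / (1 + k * s) ^ 2) (uIcc 0 n) := by
    refine continuousOn_id.div (by fun_prop) fun s hs => ?_
    rw [uIcc_of_le hn] at hs
    exact pow_ne_zero 2 (hpos s hs.1).ne'
  rw [integral_eq_sub_of_hasDerivAt hderiv hcont.intervalIntegrable]
  have hinv : (1 + k * n)⁻¹ ≤ 1 := inv_le_one_of_one_le₀ (by nlinarith)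
  simp only [mul_zero, add_zero, log_one, inv_one]
  have : 0 < k ^ 2 := by positivity
  rw [div_sub_div_same, div_le_div_iff_of_pos_right this]
  linarith

lemma mul_le_integral_of_le {f : ℝ → ℝ} {c s : ℝ} (hs : 0 ≤ s)
    (hf : IntervalIntegrable f volume 0 s) (h : ∀ t ∈ Icc 0 s, c ≤ f t) :
    c * s ≤ ∫ t in (0:ℝ)..s, f t := by
  simpa [mul_comm] using integral_mono_on hs intervalIntegrable_const hf h

lemma abs_integral_sub_mul_le {f : ℝ → ℝ} {c ε s : ℝ} (hs : 0 ≤ s)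
    (hf : IntervalIntegrable f volume 0 s) (h : ∀ t ∈ Icc 0 s, |f t - c| ≤ ε) :
    |(∫ t in (0:ℝ)..s, f t) - c * s| ≤ ε * s := by
  have hsub : (∫ t in (0:ℝ)..s, f t) - c * s = ∫ t in (0:ℝ)..s, (f t - c) := by
    simp [integral_sub hf intervalIntegrable_const, mul_comm]
  rw [hsub]
  have hbound : ∀ t ∈ uIoc 0 s, ‖f t - c‖ ≤ ε := fun t ht =>
    h t (Ioc_subset_Icc_self (uIoc_of_le hs ▸ ht))
  simpa [abs_of_nonneg hs] using norm_integral_le_of_norm_le_const hbound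

lemma intervalIntegrable_div_one_add_primitive {f : ℝ → ℝ} {g n : ℝ} (hn : 0 ≤ n)
    (hf : IntervalIntegrable f volume 0 n)
    (hpos : ∀ s ∈ Icc 0 n, 0 < 1 + g * ∫ t in (0:ℝ)..s, f t) :
    IntervalIntegrable (fun s => g / (1 + g * ∫ t in (0:ℝ)..s, f t)) volume 0 n := by
  have hprim : ContinuousOn (fun s => ∫ t in (0:ℝ)..s, f t) (Icc 0 n) := by
    simpa [uIcc_of_le hn] using continuousOn_primitive_interval' hf left_mem_uIcc
  refine ContinuousOn.intervalIntegrable ?_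
  rw [uIcc_of_le hn]
  exact continuousOn_const.div (continuousOn_const.add (continuousOn_const.mul hprim))
    fun s hs => (hpos s hs).ne'

lemma abs_div_one_add_sub_div_one_add_le {g a s A ε : ℝ} (hg : 0 ≤ g) (ha : 0 ≤ a)
    (hs : 0 ≤ s)
    (hlow : a / 2 * s ≤ A) (hdev : |A - a * s| ≤ ε * s) :
    |g / (1 + g * A) - g / (1 + a * g * s)| ≤ 2 * ε * g ^ 2 * (s / (1 + a * g * s) ^ 2) := by
  have hy : 0 ≤ a * g * s := by positivity
  have hxy : a * g * s / 2 ≤ g * A := by nlinarith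
  have hgdev : |g * A - a * g * s| ≤ g * (ε * s) := by
    rw [show g * A - a * g * s = g * (A - a * s) by ring, abs_mul, abs_of_nonneg hg]
    gcongr
  calc |g / (1 + g * A) - g / (1 + a * g * s)|
      = g * |(1 + g * A)⁻¹ - (1 + a * g * s)⁻¹| := by
        rw [div_eq_mul_inv, div_eq_mul_inv, ← mul_sub, abs_mul, abs_of_nonneg hg]
    _ ≤ g * (2 * (g * (ε * s)) / (1 + a * g * s) ^ 2) := by
        gcongr
        exact (abs_inv_one_add_sub_inv_one_add_le hy hxy).trans (by gcongr)
    _ = 2 * ε * g ^ 2 * (s / (1 + a * g * s) ^ 2) := by ring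

theorem abs_integral_div_one_add_primitive_sub_log_le {f : ℝ → ℝ} {a g ε n : ℝ}
    (ha : 0 < a) (hg : 0 < g) (hn : 0 ≤ n) (hf : IntervalIntegrable f volume 0 n)
    (hdev : ∀ t ∈ Icc 0 n, |f t - a| ≤ ε) (hlow : ∀ t ∈ Icc 0 n, a / 2 ≤ f t) :
    |(∫ s in (0:ℝ)..n, g / (1 + g * ∫ t in (0:ℝ)..s, f t)) - log (1 + a * g * n) / a|
      ≤ 2 * ε / a ^ 2 * log (1 + a * g * n) := by
  have hε : 0 ≤ ε := (abs_nonneg _).trans (hdev 0 ⟨le_rfl, hn⟩)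
  have hfs : ∀ s ∈ Icc 0 n, IntervalIntegrable f volume 0 s := fun s hs =>
    hf.mono_set (uIcc_subset_uIcc left_mem_uIcc (by rwa [uIcc_of_le hn]))
  have hlowA : ∀ s ∈ Icc 0 n, a / 2 * s ≤ ∫ t in (0:ℝ)..s, f t := fun s hs =>
    mul_le_integral_of_le hs.1 (hfs s hs) fun t ht => hlow t ⟨ht.1, ht.2.trans hs.2⟩
  have hpt : ∀ s ∈ Icc 0 n, |g / (1 + g * ∫ t in (0:ℝ)..s, f t) - g / (1 + a * g * s)|
      ≤ 2 * ε * g ^ 2 * (s / (1 + a * g * s) ^ 2) := fun s hs =>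
    abs_div_one_add_sub_div_one_add_le hg.le ha.le hs.1 (hlowA s hs)
      (abs_integral_sub_mul_le hs.1 (hfs s hs) fun t ht => hdev t ⟨ht.1, ht.2.trans hs.2⟩)
  have hpert : IntervalIntegrable (fun s => g / (1 + g * ∫ t in (0:ℝ)..s, f t)) volume 0 n :=
    intervalIntegrable_div_one_add_primitive hn hf fun s hs => by
      nlinarith [hlowA s hs, mul_nonneg ha.le hs.1]
  have hunpert : IntervalIntegrable (fun s => g / (1 + a * g * s)) volume 0 n := by
    refine ContinuousOn.intervalIntegrable (continuousOn_const.div (by fun_prop) fun s hs => ?_)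
    rw [uIcc_of_le hn] at hs
    nlinarith [mul_nonneg (mul_pos ha hg).le hs.1]
  have hmajor :
      IntervalIntegrable (fun s => 2 * ε * g ^ 2 * (s / (1 + a * g * s) ^ 2)) volume 0 n := by
    refine ContinuousOn.intervalIntegrable
      (continuousOn_const.mul (continuousOn_id.div (by fun_prop) fun s hs => ?_))
    rw [uIcc_of_le hn] at hs
    nlinarith [mul_nonneg (mul_pos ha hg).le hs.1]
  calc |(∫ s in (0:ℝ)..n, g / (1 + g * ∫ t in (0:ℝ)..s, f t)) - log (1 + a * g * n) / a|
      = |∫ s in (0:ℝ)..n, (g / (1 + g * ∫ t in (0:ℝ)..s, f t) - g / (1 + a * g * s))| := by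
        rw [integral_sub hpert hunpert,
          integral_div_one_add_mul_mul ha.ne' hg.ne' (by positivity)]
    _ ≤ ∫ s in (0:ℝ)..n, 2 * ε * g ^ 2 * (s / (1 + a * g * s) ^ 2) :=
        (abs_integral_le_integral_abs hn).trans
          (integral_mono_on hn (hpert.sub hunpert).abs hmajor hpt)
    _ ≤ 2 * ε * g ^ 2 * (log (1 + a * g * n) / (a * g) ^ 2) := by
        rw [intervalIntegral.integral_const_mul]
        gcongr
        exact integral_div_one_add_mul_sq_le (mul_pos ha hg) hn
    _ = 2 * ε / a ^ 2 * log (1 + a * g * n) := by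
        field_simp

theorem stmt_4_general (a g₀ C lam : ℝ) (ha : 0 < a) (hg₀ : 0 < g₀) (hlam : 0 ≤ lam)
    (af r : ℝ → ℝ) (hmeas : Measurable af)
    (hform : ∀ s, 0 ≤ s → af s = a + lam * r s)
    (hr : ∀ s, 0 ≤ s → |r s| ≤ C)
    (hlow : ∀ s, 0 ≤ s → a / 2 ≤ af s) :
    ∀ n : ℝ, 0 ≤ n →
      |(∫ s in (0:ℝ)..n, g₀ / (1 + g₀ * ∫ t in (0:ℝ)..s, af t))
          - (1 / a) * Real.log (1 + a * g₀ * n)|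
        ≤ (4 * C * lam / a ^ 2) * Real.log (1 + a * g₀ * n) := by
  intro n hn
  have hdev : ∀ t, 0 ≤ t → |af t - a| ≤ lam * C := fun t ht => by
    rw [hform t ht, add_sub_cancel_left, abs_mul, abs_of_nonneg hlam]
    exact mul_le_mul_of_nonneg_left (hr t ht) hlam
  have hint : IntervalIntegrable af volume 0 n := by
    rw [intervalIntegrable_iff_integrableOn_Icc_of_le hn]
    refine Measure.integrableOn_of_bounded (M := |a| + lam * C) measure_Icc_lt_top.ne
      hmeas.aestronglyMeasurable ?_
    filter_upwards [ae_restrict_mem measurableSet_Icc] with t ht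
    calc ‖af t‖ = |a + (af t - a)| := by rw [add_sub_cancel, Real.norm_eq_abs]
      _ ≤ |a| + lam * C := (abs_add_le _ _).trans (by gcongr; exact hdev t ht.1)
  have hmain := abs_integral_div_one_add_primitive_sub_log_le ha hg₀ hn hint
    (fun t ht => hdev t ht.1) (fun t ht => hlow t ht.1)
  have hL : 0 ≤ log (1 + a * g₀ * n) :=
    log_nonneg (by nlinarith [mul_nonneg (mul_pos ha hg₀).le hn])
  have hlamC : 0 ≤ lam * C := (abs_nonneg _).trans (hdev 0 le_rfl)
  rw [one_div_mul_eq_div]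
  refine hmain.trans (mul_le_mul_of_nonneg_right ?_ hL)
  rw [div_le_div_iff_of_pos_right (by positivity)]
  linarith

/-- Lemma 2.6 main computation: comparison of the perturbed logarithmic integral
`Iₙ = ∫₀ⁿ g₀/(1 + g₀ ∫₀ˢ a(t) dt) ds` with `(1/a) log(1 + a g₀ n)`. -/
theorem stmt_4 (a g₀ C lam : ℝ) (ha : 0 < a) (hg₀ : 0 < g₀) (hC : 0 ≤ C) (hlam : 0 ≤ lam)
    (af r : ℝ → ℝ) (hmeas : Measurable af)
    (hform : ∀ s, 0 ≤ s → af s = a + lam * r s)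
    (hr : ∀ s, 0 ≤ s → |r s| ≤ C)
    (hlow : ∀ s, 0 ≤ s → a / 2 ≤ af s) :
    ∀ n : ℝ, 0 ≤ n →
      |(∫ s in (0:ℝ)..n, g₀ / (1 + g₀ * ∫ t in (0:ℝ)..s, af t))
          - (1 / a) * Real.log (1 + a * g₀ * n)|
        ≤ (4 * C * lam / a ^ 2) * Real.log (1 + a * g₀ * n) :=
  stmt_4_general a g₀ C lam ha hg₀ hlam af r hmeas hform hr hlow
end
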